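/- Let H be a separable infinite-dimensional complex Hilbert space and let o be an observable on H. Then the restriction ν of o to the closed subsets of ℝ satisfies: (O1) ν(∅) = ⊥ and ν(ℝ) = ⊤; (O2) for every decreasing sequence (C_n) of closed subsets of ℝ (C_{n+1} ⊆ C_n for all n), ν(⋂_n C_n) is the intersection of the closed subspaces ν(C_n); (O3) for every unit vector x ∈ H and all closed subsets A, B of ℝ, ν_x(A) + ν_x(B) = ν_x(A ∪ B) + ν_x(A ∩ B), where ν_x(C) = re⟪x, proj_{ν(C)} x⟫. -/

import Mathlib

open scoped InnerProductSpace

noncomputable section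

variable {H : Type*} [NormedAddCommGroup H] [InnerProductSpace ℂ H] [CompleteSpace H]

/-- The type of closed subspaces of a complex inner product space `H`. -/
abbrev ClosedSubspace (H : Type*) [NormedAddCommGroup H] [InnerProductSpace ℂ H] :=
  {P : Submodule ℂ H // IsClosed (P : Set H)}

/-- The trivial closed subspace `{0}`. -/
def csBot : ClosedSubspace H :=
  ⟨⊥, by rw [Submodule.bot_coe]; exact isClosed_singleton⟩

/-- The total closed subspace `H`. -/
def csTop : ClosedSubspace H :=
  ⟨⊤, by rw [Submodule.top_coe]; exact isClosed_univ⟩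

/-- Orthogonal projection onto a closed subspace, as a map `H → H`. -/
noncomputable def cproj (P : ClosedSubspace H) (x : H) : H :=
  letI : CompleteSpace P.1 := P.2.completeSpace_coe
  (Submodule.orthogonalProjectionOnto P.1 x : H)

/-- Two subspaces are orthogonal: every vector of one is orthogonal to every
vector of the other. -/
def OrthoSub (P Q : Submodule ℂ H) : Prop :=
  ∀ x ∈ P, ∀ y ∈ Q, ⟪x, y⟫_ℂ = 0

/-- A (quantum) state: a `[0,1]`-valued map on closed subspaces with `s ⊥ = 0`,
`s ⊤ = 1` which is countably additive on pairwise orthogonal families (where the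
"sup" of such a family is the topological closure of the lattice supremum). -/
def IsState (s : ClosedSubspace H → ℝ) : Prop :=
  (∀ P, s P ∈ Set.Icc (0 : ℝ) 1) ∧
  s csBot = 0 ∧ s csTop = 1 ∧
  ∀ P : ℕ → ClosedSubspace H, (∀ m n, m ≠ n → OrthoSub (P m).1 (P n).1) →
    s ⟨(⨆ n, (P n).1).topologicalClosure, Submodule.isClosed_topologicalClosure _⟩
      = ∑' n, s (P n)

/-- A (quantum) observable: a projector-valued measure on the Borel subsets of `ℝ`. -/
def IsObservable (o : {X : Set ℝ // MeasurableSet X} → ClosedSubspace H) : Prop :=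
  o ⟨∅, MeasurableSet.empty⟩ = csBot ∧
  o ⟨Set.univ, MeasurableSet.univ⟩ = csTop ∧
  (∀ X : ℕ → {X : Set ℝ // MeasurableSet X},
    o ⟨⋃ n, (X n).1, MeasurableSet.iUnion fun n => (X n).2⟩
      = ⟨(⨆ n, (o (X n)).1).topologicalClosure,
          Submodule.isClosed_topologicalClosure _⟩) ∧
  ∀ X Y : {X : Set ℝ // MeasurableSet X}, X.1 ∩ Y.1 = ∅ → OrthoSub (o X).1 (o Y).1

/-! Countable additivity of `o` on the two-term family `A, B` gives
`o (A ∪ B) = closure (o A ⊔ o B)` for disjoint `A, B`; hence `o Aᶜ = (o A)ᗮ`, and the projection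
onto `o (A ∪ B)` is the sum of the projections. Complements turn countable additivity into
`o (⋂ Cₙ) = ⨅ o Cₙ` for arbitrary Borel sets `Cₙ`, and modularity of `C ↦ re⟪x, proj_{o C} x⟫`
follows from additivity on `A = (A \ B) ∪ (A ∩ B)` and `A ∪ B = (A \ B) ∪ B`. -/

open Submodule

theorem Submodule.starProjection_topologicalClosure_sup {𝕜 E : Type*} [RCLike 𝕜]
    [NormedAddCommGroup E] [InnerProductSpace 𝕜 E] {P Q : Submodule 𝕜 E}
    [P.HasOrthogonalProjection] [Q.HasOrthogonalProjection]
    [(P ⊔ Q).topologicalClosure.HasOrthogonalProjection] (h : P ⟂ Q) (x : E) :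
    (P ⊔ Q).topologicalClosure.starProjection x = P.starProjection x + Q.starProjection x := by
  refine eq_starProjection_of_mem_orthogonal
    (le_topologicalClosure _ (add_mem_sup (P.starProjection_apply_mem x)
      (Q.starProjection_apply_mem x))) ?_
  rw [orthogonal_closure, ← inf_orthogonal]
  refine ⟨?_, ?_⟩
  · rw [← sub_sub]
    exact sub_mem (P.sub_starProjection_mem_orthogonal x)
      (isOrtho_iff_le.1 h.symm (Q.starProjection_apply_mem x))
  · rw [add_comm, ← sub_sub]
    exact sub_mem (Q.sub_starProjection_mem_orthogonal x)
      (isOrtho_iff_le.1 h (P.starProjection_apply_mem x))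

theorem Submodule.eq_orthogonal_of_isOrtho_of_topologicalClosure_sup_eq_top {𝕜 E : Type*}
    [RCLike 𝕜] [NormedAddCommGroup E] [InnerProductSpace 𝕜 E] {P Q : Submodule 𝕜 E}
    [Q.HasOrthogonalProjection] (h : P ⟂ Q) (htop : (P ⊔ Q).topologicalClosure = ⊤) :
    Q = Pᗮ := by
  have hbot : Qᗮ ⊓ Pᗮ = ⊥ := by
    rw [inf_comm, inf_orthogonal, ← orthogonal_closure, htop, top_orthogonal_eq_bot]
  simpa [hbot] using sup_orthogonal_inf_of_hasOrthogonalProjection (isOrtho_iff_le.1 h.symm)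

theorem Subtype.apply_mk_congr {α β : Type*} {p : α → Prop} (f : Subtype p → β) {a b : α}
    (h : a = b) (ha : p a) (hb : p b) : f ⟨a, ha⟩ = f ⟨b, hb⟩ := by
  subst h
  rfl

section Observable

variable {E : Type*} [NormedAddCommGroup E] [InnerProductSpace ℂ E]

theorem orthoSub_iff_isOrtho {P Q : Submodule ℂ E} : OrthoSub P Q ↔ P ⟂ Q :=
  isOrtho_iff_inner_eq.symm

namespace IsObservable

variable {o : {X : Set ℝ // MeasurableSet X} → ClosedSubspace E} (ho : IsObservable o)
include ho

theorem isOrtho {s t : Set ℝ} (hs : MeasurableSet s) (ht : MeasurableSet t) (hst : Disjoint s t) :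
    (o ⟨s, hs⟩).1 ⟂ (o ⟨t, ht⟩).1 :=
  orthoSub_iff_isOrtho.1 (ho.2.2.2 ⟨s, hs⟩ ⟨t, ht⟩ (Set.disjoint_iff_inter_eq_empty.1 hst))

theorem union {s t : Set ℝ} (hs : MeasurableSet s) (ht : MeasurableSet t) :
    (o ⟨s ∪ t, hs.union ht⟩).1 = ((o ⟨s, hs⟩).1 ⊔ (o ⟨t, ht⟩).1).topologicalClosure := by
  let X : ℕ → {X : Set ℝ // MeasurableSet X} := fun n => cond n.bodd ⟨s, hs⟩ ⟨t, ht⟩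
  have hsurj : Function.Surjective Nat.bodd := fun b => ⟨b.toNat, by cases b <;> rfl⟩
  have hU : ⋃ n, (X n).1 = s ∪ t := by
    rw [Set.union_eq_iUnion, ← hsurj.iUnion_comp]
    exact Set.iUnion_congr fun n => Bool.apply_cond Subtype.val
  have hS : ⨆ n, (o (X n)).1 = (o ⟨s, hs⟩).1 ⊔ (o ⟨t, ht⟩).1 := by
    rw [sup_eq_iSup, ← hsurj.iSup_comp]
    exact iSup_congr fun n => Bool.apply_cond (fun u => (o u).1)
  calc (o ⟨s ∪ t, hs.union ht⟩).1
      = (o ⟨⋃ n, (X n).1, MeasurableSet.iUnion fun n => (X n).2⟩).1 :=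
        congrArg Subtype.val (Subtype.apply_mk_congr o hU.symm _ _)
    _ = (⨆ n, (o (X n)).1).topologicalClosure := congrArg Subtype.val (ho.2.2.1 X)
    _ = _ := by rw [hS]

variable [CompleteSpace E]

theorem compl {s : Set ℝ} (hs : MeasurableSet s) : (o ⟨sᶜ, hs.compl⟩).1 = (o ⟨s, hs⟩).1ᗮ := by
  have : CompleteSpace (o ⟨sᶜ, hs.compl⟩).1 := (o _).2.completeSpace_coe
  refine eq_orthogonal_of_isOrtho_of_topologicalClosure_sup_eq_top
    (ho.isOrtho hs hs.compl disjoint_compl_right) ?_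
  rw [← ho.union hs hs.compl,
    Subtype.apply_mk_congr o (Set.union_compl_self s) _ MeasurableSet.univ, ho.2.1]
  rfl

theorem iInter {s : ℕ → Set ℝ} (hs : ∀ n, MeasurableSet (s n)) :
    (o ⟨⋂ n, s n, .iInter hs⟩).1 = ⨅ n, (o ⟨s n, hs n⟩).1 := by
  have hc : MeasurableSet (⋃ n, (s n)ᶜ) := .iUnion fun n => (hs n).compl
  calc (o ⟨⋂ n, s n, .iInter hs⟩).1
      = (o ⟨(⋃ n, (s n)ᶜ)ᶜ, hc.compl⟩).1 := by
        rw [Subtype.apply_mk_congr o (by simp : ⋂ n, s n = (⋃ n, (s n)ᶜ)ᶜ) _ hc.compl]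
    _ = (⨆ n, (o ⟨(s n)ᶜ, (hs n).compl⟩).1).topologicalClosureᗮ := by
        rw [ho.compl hc, congrArg Subtype.val (ho.2.2.1 fun n => ⟨(s n)ᶜ, (hs n).compl⟩)]
    _ = ⨅ n, (o ⟨s n, hs n⟩).1 := by
        have : ∀ n, CompleteSpace (o ⟨s n, hs n⟩).1 := fun n => (o _).2.completeSpace_coe
        rw [orthogonal_closure, ← iInf_orthogonal]
        exact iInf_congr fun n => by rw [ho.compl (hs n), orthogonal_orthogonal]

theorem cproj_union {s t : Set ℝ} (hs : MeasurableSet s) (ht : MeasurableSet t)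
    (hst : Disjoint s t) (x : E) :
    cproj (o ⟨s ∪ t, hs.union ht⟩) x = cproj (o ⟨s, hs⟩) x + cproj (o ⟨t, ht⟩) x := by
  have : CompleteSpace (o ⟨s, hs⟩).1 := (o _).2.completeSpace_coe
  have : CompleteSpace (o ⟨t, ht⟩).1 := (o _).2.completeSpace_coe
  have : CompleteSpace ((o ⟨s, hs⟩).1 ⊔ (o ⟨t, ht⟩).1).topologicalClosure :=
    (isClosed_topologicalClosure _).completeSpace_coe
  rw [show o ⟨s ∪ t, hs.union ht⟩ = ⟨_, isClosed_topologicalClosure _⟩ from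
    Subtype.ext (ho.union hs ht)]
  exact starProjection_topologicalClosure_sup (ho.isOrtho hs ht hst) x

theorem re_inner_cproj_union {s t : Set ℝ} (hs : MeasurableSet s) (ht : MeasurableSet t)
    (hst : Disjoint s t) (x : E) :
    (⟪x, cproj (o ⟨s ∪ t, hs.union ht⟩) x⟫_ℂ).re
      = (⟪x, cproj (o ⟨s, hs⟩) x⟫_ℂ).re + (⟪x, cproj (o ⟨t, ht⟩) x⟫_ℂ).re := by
  rw [ho.cproj_union hs ht hst, inner_add_right, Complex.add_re]

theorem re_inner_cproj_union_add_inter {s t : Set ℝ} (hs : MeasurableSet s)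
    (ht : MeasurableSet t) (x : E) :
    (⟪x, cproj (o ⟨s, hs⟩) x⟫_ℂ).re + (⟪x, cproj (o ⟨t, ht⟩) x⟫_ℂ).re
      = (⟪x, cproj (o ⟨s ∪ t, hs.union ht⟩) x⟫_ℂ).re
        + (⟪x, cproj (o ⟨s ∩ t, hs.inter ht⟩) x⟫_ℂ).re := by
  have hs_split := ho.re_inner_cproj_union (hs.diff ht) (hs.inter ht)
    (Set.disjoint_sdiff_left.mono_right Set.inter_subset_right) x
  have hunion_split := ho.re_inner_cproj_union (hs.diff ht) ht Set.disjoint_sdiff_left x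
  rw [Subtype.apply_mk_congr o (Set.sdiff_union_inter s t) _ hs] at hs_split
  rw [Subtype.apply_mk_congr o Set.sdiff_union_self _ (hs.union ht)] at hunion_split
  linarith

end IsObservable

end Observable

/-- The restriction of an observable to the closed subsets of `ℝ` satisfies
(O1) `ν ∅ = ⊥`, `ν ℝ = ⊤`; (O2) `ν` sends intersections of decreasing sequences of
closed sets to intersections; (O3) for every unit vector `x` the induced map
`C ↦ re⟪x, proj_{ν C} x⟫` is modular on closed sets. -/
theorem observable_restriction_is_quantum_valuation
    (o : {X : Set ℝ // MeasurableSet X} → ClosedSubspace H) (ho : IsObservable o) :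
    (o ⟨∅, MeasurableSet.empty⟩ = csBot ∧ o ⟨Set.univ, MeasurableSet.univ⟩ = csTop) ∧
    (∀ (C : ℕ → Set ℝ) (hC : ∀ n, IsClosed (C n)), (∀ n, C (n + 1) ⊆ C n) →
       o ⟨⋂ n, C n, MeasurableSet.iInter fun n => (hC n).measurableSet⟩
         = ⟨⨅ n, (o ⟨C n, (hC n).measurableSet⟩).1, by
             rw [Submodule.coe_iInf]
             exact isClosed_iInter fun n => (o ⟨C n, (hC n).measurableSet⟩).2⟩) ∧
    (∀ x : H, ‖x‖ = 1 → ∀ (A B : Set ℝ) (hA : IsClosed A) (hB : IsClosed B),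
       (⟪x, cproj (o ⟨A, hA.measurableSet⟩) x⟫_ℂ).re
         + (⟪x, cproj (o ⟨B, hB.measurableSet⟩) x⟫_ℂ).re
       = (⟪x, cproj (o ⟨A ∪ B, (hA.union hB).measurableSet⟩) x⟫_ℂ).re
         + (⟪x, cproj (o ⟨A ∩ B, (hA.inter hB).measurableSet⟩) x⟫_ℂ).re) :=
  ⟨⟨ho.1, ho.2.1⟩, fun _ hC _ => Subtype.ext (ho.iInter fun n => (hC n).measurableSet),
    fun x _ _ _ hA hB => ho.re_inner_cproj_union_add_inter hA.measurableSet hB.measurableSet x⟩
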